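/- arXiv:math/0610711 — 3 statements merged into one kernel-verified Lean document; each statement's English description precedes it below -/
import Mathlib

section
/- For two abstract crystals B₁, B₂ with the tensor product structure and i ∈ I imaginary (so a_{ii} ≤ 0): the three cases in the definition of ẽ_i(b⊗b') — φ_i(b) > ε_i(b') - a_{ii}; ε_i(b') < φ_i(b) ≤ ε_i(b') - a_{ii}; φ_i(b) ≤ ε_i(b') — are mutually exclusive and exhaustive, and the tensor product rule satisfies the crystal axiom: if ẽ_i(b⊗b') ≠ 0 then ε_i(ẽ_i(b⊗b')) = ε_i(b⊗b') and φ_i(ẽ_i(b⊗b')) = φ_i(b⊗b') + a_{ii}. -/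
open Classical

/-- An abstract crystal for a quantum generalized Kac-Moody algebra: weight lattice `P`,
pairings `⟨h_i, ·⟩ : P → ℤ`, simple roots `α_i`, real indices `re`, diagonal entries
`aii i = a_{ii}`. `ẽ_i b = 0`, `f̃_i b = 0` are modeled by `none`. -/
structure AbstractCrystal {I P : Type*} [AddCommGroup P]
    (pair : I → P →+ ℤ) (α : I → P) (re : I → Prop) (aii : I → ℤ) where
  carrier : Type*
  wt : carrier → P
  e : I → carrier → Option carrier
  f : I → carrier → Option carrier
  eps : I → carrier → WithBot ℤ
  phi : I → carrier → WithBot ℤ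
  wt_e : ∀ i b b', e i b = some b' → wt b' = wt b + α i
  wt_f : ∀ i b b', f i b = some b' → wt b' = wt b - α i
  phi_eps : ∀ i b, phi i b = eps i b + ((pair i (wt b) : ℤ) : WithBot ℤ)
  e_f : ∀ i b b', f i b = some b' ↔ e i b' = some b
  e_re : ∀ i b b', re i → e i b = some b' →
    eps i b' + 1 = eps i b ∧ phi i b' = phi i b + 1
  e_im : ∀ i b b', ¬ re i → e i b = some b' →
    eps i b' = eps i b ∧ phi i b' = phi i b + ((aii i : ℤ) : WithBot ℤ)
  f_re : ∀ i b b', re i → f i b = some b' →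
    eps i b' = eps i b + 1 ∧ phi i b' + 1 = phi i b
  f_im : ∀ i b b', ¬ re i → f i b = some b' →
    eps i b' = eps i b ∧ phi i b' + ((aii i : ℤ) : WithBot ℤ) = phi i b
  bot_ef : ∀ i b, phi i b = ⊥ → e i b = none ∧ f i b = none

variable {I P : Type*} [AddCommGroup P] {pair : I → P →+ ℤ} {α : I → P}
  {re : I → Prop} {aii : I → ℤ}

/-- Tensor product `ε`: `ε_i(b ⊗ b') = max(ε_i(b), ε_i(b') - ⟨h_i, wt b⟩)`. -/
noncomputable def tEps (C D : AbstractCrystal pair α re aii) (i : I)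
    (p : C.carrier × D.carrier) : WithBot ℤ :=
  max (C.eps i p.1) (D.eps i p.2 + ((-(pair i (C.wt p.1)) : ℤ) : WithBot ℤ))

/-- Tensor product `φ`: `φ_i(b ⊗ b') = max(φ_i(b) + ⟨h_i, wt b'⟩, φ_i(b'))`. -/
noncomputable def tPhi (C D : AbstractCrystal pair α re aii) (i : I)
    (p : C.carrier × D.carrier) : WithBot ℤ :=
  max (C.phi i p.1 + ((pair i (D.wt p.2) : ℤ) : WithBot ℤ)) (D.phi i p.2)

/-- Tensor product `f̃_i`: `f̃_i(b ⊗ b') = f̃_i b ⊗ b'` if `φ_i(b) > ε_i(b')`, and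
`b ⊗ f̃_i b'` if `φ_i(b) ≤ ε_i(b')`. -/
noncomputable def tF (C D : AbstractCrystal pair α re aii) (i : I)
    (p : C.carrier × D.carrier) : Option (C.carrier × D.carrier) :=
  if D.eps i p.2 < C.phi i p.1 then (C.f i p.1).map (fun b => (b, p.2))
  else (D.f i p.2).map (fun b' => (p.1, b'))

/-- Tensor product `ẽ_i` for imaginary `i`: `ẽ_i b ⊗ b'` if `φ_i(b) > ε_i(b') - a_{ii}`,
`0` if `ε_i(b') < φ_i(b) ≤ ε_i(b') - a_{ii}`, and `b ⊗ ẽ_i b'` if `φ_i(b) ≤ ε_i(b')`. -/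
noncomputable def tEim (C D : AbstractCrystal pair α re aii) (i : I)
    (p : C.carrier × D.carrier) : Option (C.carrier × D.carrier) :=
  if D.eps i p.2 + ((-(aii i) : ℤ) : WithBot ℤ) < C.phi i p.1 then
    (C.e i p.1).map (fun b => (b, p.2))
  else if C.phi i p.1 ≤ D.eps i p.2 then (D.e i p.2).map (fun b' => (p.1, b'))
  else none

/-!
Since `a_{ii} ≤ 0`, the thresholds `ε_i(b') ≤ ε_i(b') - a_{ii}` are ordered, which makes the
three cases a partition. The axioms force `⟨h_i, α_i⟩ = a_{ii}` as soon as some `ẽ_i b` is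
defined, so `ẽ_i` shifts `⟨h_i, wt⟩` by `a_{ii}`. When `ẽ_i` acts on `b'`, this shifts both terms
of the maximum defining `φ_i(b ⊗ b')` by `a_{ii}` and leaves `ε_i(b ⊗ b')` alone; when it acts on
`b`, the case condition `φ_i(b) > ε_i(b') - a_{ii}` makes the `b`-terms dominate both maxima,
before and after the move.
-/

theorem trichotomy_of_le {β : Type*} [LinearOrder β] {x y z : β} (hxy : x ≤ y) :
    (y < z ∨ (x < z ∧ z ≤ y) ∨ z ≤ x) ∧ ¬ (y < z ∧ (x < z ∧ z ≤ y)) ∧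
      ¬ (y < z ∧ z ≤ x) ∧ ¬ ((x < z ∧ z ≤ y) ∧ z ≤ x) := by
  refine ⟨?_, fun ⟨h, _, h'⟩ => h'.not_gt h, fun ⟨h, h'⟩ => (h'.trans hxy).not_gt h,
    fun ⟨⟨h, _⟩, h'⟩ => h'.not_gt h⟩
  rcases le_or_gt z x with h | h
  · exact Or.inr (Or.inr h)
  · rcases lt_or_ge y z with h' | h'
    · exact Or.inl h'
    · exact Or.inr (Or.inl ⟨h, h'⟩)

namespace AbstractCrystal

variable (C : AbstractCrystal pair α re aii) {i : I}

theorem phi_ne_bot_of_e_eq_some {b b₀ : C.carrier} (h : C.e i b = some b₀) :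
    C.phi i b ≠ ⊥ := fun hb => by simp [(C.bot_ef i b hb).1] at h

theorem pair_alpha_eq_aii (hi : ¬ re i) {b b₀ : C.carrier} (h : C.e i b = some b₀) :
    pair i (α i) = aii i := by
  obtain ⟨x, hx⟩ := WithBot.ne_bot_iff_exists.mp (C.phi_ne_bot_of_e_eq_some h)
  have h₀ := C.phi_eps i b₀
  rw [(C.e_im i b b₀ hi h).1, C.wt_e i b b₀ h, map_add, WithBot.coe_add, ← add_assoc,
    ← C.phi_eps, (C.e_im i b b₀ hi h).2, ← hx] at h₀
  exact_mod_cast (add_left_cancel (a := x) (by exact_mod_cast h₀)).symm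

theorem pair_wt_e (hi : ¬ re i) {b b₀ : C.carrier} (h : C.e i b = some b₀) :
    pair i (C.wt b₀) = pair i (C.wt b) + aii i := by
  rw [C.wt_e i b b₀ h, map_add, C.pair_alpha_eq_aii hi h]

end AbstractCrystal

section Tensor

variable {C D : AbstractCrystal pair α re aii} {i : I}

theorem tEps_tPhi_of_e_fst (hi : ¬ re i) (ha : aii i ≤ 0) {b b₀ : C.carrier} {b' : D.carrier}
    (hcase : D.eps i b' + ((-(aii i) : ℤ) : WithBot ℤ) < C.phi i b) (he : C.e i b = some b₀) :
    tEps C D i (b₀, b') = tEps C D i (b, b') ∧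
      tPhi C D i (b₀, b') = tPhi C D i (b, b') + ((aii i : ℤ) : WithBot ℤ) := by
  obtain ⟨heps, hphi⟩ := C.e_im i b b₀ hi he
  simp only [tEps, tPhi, heps, hphi, C.pair_wt_e hi he, C.phi_eps i b, D.phi_eps i b']
    at hcase ⊢
  generalize C.eps i b = E, D.eps i b' = E' at *
  induction E using WithBot.recBotCoe with
  | bot => simp only [WithBot.bot_add, not_lt_bot] at hcase
  | coe u =>
    induction E' using WithBot.recBotCoe with
    | bot => simp only [WithBot.bot_add, bot_le, max_eq_left, add_right_comm, and_self]
    | coe w =>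
      norm_cast at hcase ⊢
      omega

theorem tEps_tPhi_of_e_snd (hi : ¬ re i) {b : C.carrier} {b' b₀ : D.carrier}
    (he : D.e i b' = some b₀) :
    tEps C D i (b, b₀) = tEps C D i (b, b') ∧
      tPhi C D i (b, b₀) = tPhi C D i (b, b') + ((aii i : ℤ) : WithBot ℤ) := by
  obtain ⟨heps, hphi⟩ := D.e_im i b' b₀ hi he
  refine ⟨by rw [tEps, tEps, heps], ?_⟩
  simp only [tPhi, hphi, D.pair_wt_e hi he, WithBot.coe_add, ← add_assoc]
  exact max_add_add_right _ _ _

end Tensor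

/-- for imaginary `i` (`a_{ii} ≤ 0`), the three cases in the definition of
`ẽ_i(b ⊗ b')` are mutually exclusive and exhaustive, and the tensor product rule
satisfies the crystal axiom: if `ẽ_i(b ⊗ b') ≠ 0` then `ε_i(ẽ_i(b ⊗ b')) = ε_i(b ⊗ b')`
and `φ_i(ẽ_i(b ⊗ b')) = φ_i(b ⊗ b') + a_{ii}`. -/
theorem stmt8 (C D : AbstractCrystal pair α re aii) (i : I) (hi : ¬ re i)
    (ha : aii i ≤ 0) :
    (∀ p : C.carrier × D.carrier,
      ((D.eps i p.2 + ((-(aii i) : ℤ) : WithBot ℤ) < C.phi i p.1) ∨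
       (D.eps i p.2 < C.phi i p.1 ∧ C.phi i p.1 ≤ D.eps i p.2 + ((-(aii i) : ℤ) : WithBot ℤ)) ∨
       (C.phi i p.1 ≤ D.eps i p.2)) ∧
      ¬ ((D.eps i p.2 + ((-(aii i) : ℤ) : WithBot ℤ) < C.phi i p.1) ∧
         (D.eps i p.2 < C.phi i p.1 ∧ C.phi i p.1 ≤ D.eps i p.2 + ((-(aii i) : ℤ) : WithBot ℤ))) ∧
      ¬ ((D.eps i p.2 + ((-(aii i) : ℤ) : WithBot ℤ) < C.phi i p.1) ∧
         (C.phi i p.1 ≤ D.eps i p.2)) ∧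
      ¬ ((D.eps i p.2 < C.phi i p.1 ∧ C.phi i p.1 ≤ D.eps i p.2 + ((-(aii i) : ℤ) : WithBot ℤ)) ∧
         (C.phi i p.1 ≤ D.eps i p.2))) ∧
    (∀ p q : C.carrier × D.carrier, tEim C D i p = some q →
      tEps C D i q = tEps C D i p ∧
      tPhi C D i q = tPhi C D i p + ((aii i : ℤ) : WithBot ℤ)) := by
  refine ⟨fun p => trichotomy_of_le
    (le_add_of_nonneg_right (by exact_mod_cast neg_nonneg.mpr ha)), ?_⟩
  rintro ⟨b, b'⟩ q hq
  rw [tEim] at hq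
  split_ifs at hq with hcase
  · obtain ⟨b₀, he, rfl⟩ := Option.map_eq_some_iff.mp hq
    exact tEps_tPhi_of_e_fst hi ha hcase he
  · obtain ⟨b₀, he, rfl⟩ := Option.map_eq_some_iff.mp hq
    exact tEps_tPhi_of_e_snd hi he
end

section
/- (Monster S-operator computation.) With the Monster Lie algebra data — real index -1 with ⟨h_{-1},α_{-1}⟩=2, ⟨h_{-1},α_{k_t}⟩ = -(k-1) for the imaginary index k_t (k ≥ 1, 1 ≤ t ≤ c(k)) — and the sequence ι listing -1, then 1_1,...,1_{c(1)}, then -1, then 1_1,...,1_{c(1)},2_1,...,2_{c(2)}, -1, etc., the operator S applied to the coordinate x_{b(n)} at the (n+1)-th occurrence of -1 gives S_{b(n)}x_{b(n)}(x) = Σ_{k=1}^{n} k·(x_{b(n)+σ(k)+1} + ... + x_{b(n)+σ(k+1)}) - x_{b(n)+σ(n+1)+1}. -/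
/-- Monster `S`-operator computation: with the Monster Lie algebra data —
`⟨h_{-1},α_{-1}⟩ = 2` and `⟨h_{-1},α_{k_t}⟩ = -(k-1)` for the imaginary indices `k_t`
(`k ≥ 1`, `1 ≤ t ≤ c k`) — and `ι` listing between consecutive occurrences `b n` and
`b (n+1) = b n + σ(n+1) + 1` of the real index `-1` the imaginary indices
`1_1,…,1_{c(1)},2_1,…,2_{c(2)},…,(n+1)_1,…,(n+1)_{c(n+1)}` (so positions
`b n + σ(k-1)+1, …, b n + σ(k)` carry index `k`), the operator `S` applied to the
coordinate form `x_{b n}` gives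
`S_{b n} x_{b n}(x) = x_{b n} - β_{b n}(x)
  = Σ_{k=1}^n k (x_{b n+σ(k)+1} + ⋯ + x_{b n+σ(k+1)}) - x_{b n+σ(n+1)+1}`. -/
theorem stmt13 (c : ℕ → ℕ) (b σ : ℕ → ℕ)
    (hb : ∀ n, b n = (∑ k ∈ Finset.Icc 1 n, (n + 1 - k) * c k) + n + 1)
    (hσ : ∀ n, σ n = ∑ k ∈ Finset.Icc 1 n, c k)
    (x : ℕ → ℤ) (n : ℕ) (hn : 1 ≤ n) :
    x (b n) - (x (b n)
        + (∑ k ∈ Finset.Icc 1 (n + 1),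
            (-((k : ℤ) - 1)) * ∑ j ∈ Finset.Icc (σ (k - 1) + 1) (σ k), x (b n + j))
        + x (b (n + 1)))
      = (∑ k ∈ Finset.Icc 1 n,
          (k : ℤ) * ∑ j ∈ Finset.Icc (σ k + 1) (σ (k + 1)), x (b n + j))
        - x (b n + σ (n + 1) + 1) := by

  have hb1 : b (n + 1) = b n + σ (n + 1) + 1 := by
    rw [hb, hb, hσ]
    have h1 : ∑ k ∈ Finset.Icc 1 (n + 1), (n + 1 + 1 - k) * c k
        = ∑ k ∈ Finset.Icc 1 (n + 1), ((n + 1 - k) * c k + c k) := by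
      refine Finset.sum_congr rfl fun k hk => ?_
      simp only [Finset.mem_Icc] at hk
      have : n + 1 + 1 - k = (n + 1 - k) + 1 := by omega
      rw [this]; ring
    rw [h1, Finset.sum_add_distrib]
    have h2 : ∑ k ∈ Finset.Icc 1 (n + 1), (n + 1 - k) * c k
        = ∑ k ∈ Finset.Icc 1 n, (n + 1 - k) * c k := by
      rw [show Finset.Icc 1 (n + 1) = insert (n + 1) (Finset.Icc 1 n) by
        ext a; simp [Finset.mem_Icc]; omega]
      rw [Finset.sum_insert (by simp)]
      simp
    rw [h2]; ring
  have key : ∑ k ∈ Finset.Icc 1 (n + 1),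
      (-((k : ℤ) - 1)) * ∑ j ∈ Finset.Icc (σ (k - 1) + 1) (σ k), x (b n + j)
      = -∑ k ∈ Finset.Icc 1 n,
          (k : ℤ) * ∑ j ∈ Finset.Icc (σ k + 1) (σ (k + 1)), x (b n + j) := by
    have hsub : Finset.Icc 2 (n + 1) ⊆ Finset.Icc 1 (n + 1) := by
      intro a; simp [Finset.mem_Icc]; omega
    rw [← Finset.sum_subset hsub (by
      intro a ha hna
      simp only [Finset.mem_Icc] at ha hna
      have : a = 1 := by omega
      subst this; simp)]
    have hmap : Finset.Icc 2 (n + 1) = (Finset.Icc 1 n).map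
        ⟨fun k => k + 1, add_left_injective 1⟩ := by
      ext a
      simp only [Finset.mem_map, Finset.mem_Icc, Function.Embedding.coeFn_mk]
      constructor
      · intro h; exact ⟨a - 1, ⟨by omega, by omega⟩, by omega⟩
      · rintro ⟨m, hm, rfl⟩; omega
    rw [hmap, Finset.sum_map, ← Finset.sum_neg_distrib]
    refine Finset.sum_congr rfl fun k hk => ?_
    simp only [Function.Embedding.coeFn_mk, Nat.add_sub_cancel]
    push_cast
    ring
  rw [key, hb1]
  ring
end

section
/- (Corollary for purely imaginary index set.) Suppose all indices in I are imaginary (⟨h_i,α_j⟩ ≤ 0 for all i,j). Then the set Θ_ι of linear forms generated from coordinate forms x_j by the operators S_k consists only of nonnegative linear combinations of the coordinate forms x_j; consequently condition (i) of the polyhedral description (ψ(x) ≥ 0 for all ψ ∈ Θ_ι) holds automatically for every x with nonnegative entries. -/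
open scoped BigOperators
open Classical

section ZCrystal

variable {I : Type*}

/-- Eventually zero sequences of nonnegative integers (positions `1,2,3,...`). -/
def EvZero (x : ℕ → ℕ) : Prop := ∃ N, ∀ k ≥ N, x k = 0

/-- `ι = (..., i_2, i_1)` satisfies: consecutive indices differ and every index
appears infinitely often. -/
def GoodSeq (ι : ℕ → I) : Prop :=
  (∀ k, 1 ≤ k → ι k ≠ ι (k + 1)) ∧ ∀ i : I, {k : ℕ | 1 ≤ k ∧ ι k = i}.Infinite

/-- `σ_k(x)`: `x_k + Σ_{j>k} ⟨h_{i_k}, α_{i_j}⟩ x_j` if `i_k` is real,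
`Σ_{j>k} ⟨h_{i_k}, α_{i_j}⟩ x_j` if `i_k` is imaginary. -/
noncomputable def sigZ (a : I → I → ℤ) (ι : ℕ → I) (re : I → Prop) (x : ℕ → ℕ) (k : ℕ) : ℤ :=
  (if re (ι k) then (x k : ℤ) else 0) +
    ∑ᶠ j : ℕ, if k < j then a (ι k) (ι j) * (x j : ℤ) else 0

/-- `σ^{(i)}(x) = max_{k : i_k = i} σ_k(x)`. -/
noncomputable def sigSup (a : I → I → ℤ) (ι : ℕ → I) (re : I → Prop) (x : ℕ → ℕ) (i : I) : ℤ :=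
  sSup {z : ℤ | ∃ k : ℕ, 1 ≤ k ∧ ι k = i ∧ sigZ a ι re x k = z}

/-- `n_f = min {k | i_k = i, σ_k(x) = σ^{(i)}(x)}`. -/
noncomputable def nfPos (a : I → I → ℤ) (ι : ℕ → I) (re : I → Prop) (x : ℕ → ℕ) (i : I) : ℕ :=
  sInf {k : ℕ | 1 ≤ k ∧ ι k = i ∧ sigZ a ι re x k = sigSup a ι re x i}

/-- The Kashiwara operator `f̃_i`: add `1` at position `n_f`. -/
noncomputable def ftil (a : I → I → ℤ) (ι : ℕ → I) (re : I → Prop) (i : I) (x : ℕ → ℕ) :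
    ℕ → ℕ :=
  fun k => if k = nfPos a ι re x i then x k + 1 else x k

/-- `k^{(-)}`: the largest `j < k` with `i_j = i_k` (and `0` if there is none). -/
noncomputable def kminus (ι : ℕ → I) (k : ℕ) : ℕ := sSup {j : ℕ | 1 ≤ j ∧ j < k ∧ ι j = ι k}

/-- `k^{(+)}`: the smallest `j > k` with `i_j = i_k`. -/
noncomputable def kplus (ι : ℕ → I) (k : ℕ) : ℕ := sInf {j : ℕ | k < j ∧ ι j = ι k}

/-- `n_e`: for real `i` the largest maximizer of `σ`, for imaginary `i` equal to `n_f`. -/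
noncomputable def nePos (a : I → I → ℤ) (ι : ℕ → I) (re : I → Prop) (x : ℕ → ℕ) (i : I) : ℕ :=
  if re i then sSup {k : ℕ | 1 ≤ k ∧ ι k = i ∧ sigZ a ι re x k = sigSup a ι re x i}
  else nfPos a ι re x i

/-- `Σ_{s<j<t} ⟨h_i, α_{i_j}⟩ x_j`. -/
def betw (a : I → I → ℤ) (ι : ℕ → I) (i : I) (x : ℕ → ℕ) (s t : ℕ) : ℤ :=
  ∑ j ∈ Finset.Ioo s t, a i (ι j) * (x j : ℤ)

/-- The condition (EC) under which `ẽ_i x ≠ 0`. -/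
def EC (a : I → I → ℤ) (ι : ℕ → I) (re : I → Prop) (x : ℕ → ℕ) (i : I) : Prop :=
  if re i then 0 < sigSup a ι re x i
  else kminus ι (nePos a ι re x i) = 0 ∨ 1 < x (nePos a ι re x i) ∨
    (x (nePos a ι re x i) = 1 ∧
      betw a ι i x (kminus ι (nePos a ι re x i)) (nePos a ι re x i) < 0)

/-- The Kashiwara operator `ẽ_i`: subtract `1` at position `n_e` when (EC) holds,
`0` (i.e. `none`) otherwise. -/
noncomputable def etil (a : I → I → ℤ) (ι : ℕ → I) (re : I → Prop) (i : I) (x : ℕ → ℕ) :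
    Option (ℕ → ℕ) :=
  if EC a ι re x i then
    some (fun k => if k = nePos a ι re x i then x k - 1 else x k)
  else none

end ZCrystal

section Theta

variable {I : Type*}

/-- The linear form `β_k` (as a coefficient sequence), with `β_0 = 0`. -/
noncomputable def betaForm (a : I → I → ℤ) (ι : ℕ → I) (re : I → Prop) (k : ℕ) : ℕ → ℤ :=
  fun j =>
    if k = 0 then 0
    else if re (ι k) then
      (if j = k then 1 else 0) + (if k < j ∧ j < kplus ι k then a (ι k) (ι j) else 0)
        + (if j = kplus ι k then 1 else 0)
    else if k < j ∧ j ≤ kplus ι k then a (ι k) (ι j) else 0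

/-- The piecewise-linear operator `S_k` on linear forms `ψ = Σ ψ_j x_j`:
`S_k ψ = ψ - ψ_k β_k` if `ψ_k > 0` and `i_k` real,
`S_k ψ = ψ - ψ_k (x_k + Σ_{k<j<k^{(+)}}⟨h_{i_k},α_{i_j}⟩x_j - x_{k^{(+)}})` if `ψ_k > 0`
and `i_k` imaginary, and `S_k ψ = ψ - ψ_k β_{k^{(-)}}` if `ψ_k ≤ 0`. -/
noncomputable def Sop (a : I → I → ℤ) (ι : ℕ → I) (re : I → Prop) (k : ℕ) (ψ : ℕ → ℤ) :
    ℕ → ℤ :=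
  if 0 < ψ k then
    if re (ι k) then fun j => ψ j - ψ k * betaForm a ι re k j
    else fun j => ψ j - ψ k * ((if j = k then 1 else 0)
        + (if k < j ∧ j < kplus ι k then a (ι k) (ι j) else 0)
        - (if j = kplus ι k then 1 else 0))
  else fun j => ψ j - ψ k * betaForm a ι re (kminus ι k) j

/-- The set `Θ_ι` of linear forms obtained from coordinate forms `x_s` by applying
the operators `S_k`. -/
inductive InTheta (a : I → I → ℤ) (ι : ℕ → I) (re : I → Prop) : (ℕ → ℤ) → Prop
  | coord (s : ℕ) (hs : 1 ≤ s) : InTheta a ι re (fun j => if j = s then 1 else 0)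
  | step (ψ : ℕ → ℤ) (k : ℕ) (hk : 1 ≤ k) (h : InTheta a ι re ψ) :
      InTheta a ι re (Sop a ι re k ψ)

/-- Evaluation of a linear form on a sequence: `ψ(x) = Σ_j ψ_j x_j`. -/
noncomputable def evalF (ψ : ℕ → ℤ) (x : ℕ → ℕ) : ℤ := ∑ᶠ j : ℕ, ψ j * (x j : ℤ)

end Theta

section Imaginary

variable {I : Type*} {a : I → I → ℤ} {ι : ℕ → I} {re : I → Prop}

theorem Sop_eq_self_of_eq_zero {k : ℕ} {ψ : ℕ → ℤ} (hψk : ψ k = 0) :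
    Sop a ι re k ψ = ψ := by
  unfold Sop
  simp [hψk]

/-- The subtracted form `x_k + Σ_{k<j<k⁺} ⟨h_{i_k}, α_{i_j}⟩ x_j - x_{k⁺}` has no positive
coefficient except at `j = k`, where subtracting `ψ_k` leaves exactly `0` (or `ψ_k` if `k⁺ = k`). -/
theorem Sop_nonneg_of_not_re {k : ℕ} {ψ : ℕ → ℤ} (hk : ¬ re (ι k))
    (ha : ∀ j, a (ι k) (ι j) ≤ 0) (hψ : ∀ j, 0 ≤ ψ j) (j : ℕ) :
    0 ≤ Sop a ι re k ψ j := by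
  rcases (hψ k).eq_or_lt with hψk | hψk
  · rw [Sop_eq_self_of_eq_zero hψk.symm]
    exact hψ j
  have hmid : ψ k * (if k < j ∧ j < kplus ι k then a (ι k) (ι j) else 0) ≤ 0 :=
    mul_nonpos_of_nonneg_of_nonpos hψk.le (by split_ifs <;> simp [ha])
  simp only [Sop, if_pos hψk, if_neg hk]
  by_cases hjk : j = k
  · subst hjk
    simp only [lt_irrefl, false_and, if_false, if_true] at hmid ⊢
    split_ifs <;> linarith
  · simp only [if_neg hjk]
    split_ifs at hmid ⊢ <;> nlinarith [hψ j]

theorem InTheta.nonneg (him : ∀ i, ¬ re i) (hneg : ∀ i j, a i j ≤ 0) {ψ : ℕ → ℤ}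
    (hψ : InTheta a ι re ψ) (j : ℕ) : 0 ≤ ψ j := by
  induction hψ generalizing j with
  | coord s _ => dsimp only; split_ifs <;> norm_num
  | step ψ k _ _ ih => exact Sop_nonneg_of_not_re (him _) (fun _ => hneg _ _) ih j

theorem evalF_nonneg {ψ : ℕ → ℤ} (hψ : ∀ j, 0 ≤ ψ j) (x : ℕ → ℕ) : 0 ≤ evalF ψ x :=
  finsum_nonneg fun j => mul_nonneg (hψ j) (Int.natCast_nonneg _)

end Imaginary

theorem stmt15_general {I : Type*} (a : I → I → ℤ) (ι : ℕ → I) (re : I → Prop)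
    (him : ∀ i : I, ¬ re i) (hneg : ∀ i j : I, a i j ≤ 0) :
    (∀ ψ : ℕ → ℤ, InTheta a ι re ψ → ∀ j : ℕ, 0 ≤ ψ j) ∧
    (∀ ψ : ℕ → ℤ, InTheta a ι re ψ → ∀ x : ℕ → ℕ, EvZero x → 0 ≤ evalF ψ x) :=
  ⟨fun _ hψ => hψ.nonneg him hneg,
    fun _ hψ x _ => evalF_nonneg (hψ.nonneg him hneg) x⟩

/-- when all indices are imaginary (`⟨h_i,α_j⟩ ≤ 0` for all `i,j`),
every form in `Θ_ι` is a nonnegative linear combination of the coordinate forms;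
consequently `ψ(x) ≥ 0` for every `ψ ∈ Θ_ι` and every `x` with nonnegative entries. -/
theorem stmt15 {I : Type*} (a : I → I → ℤ) (ι : ℕ → I) (re : I → Prop)
    (hι : GoodSeq ι) (him : ∀ i : I, ¬ re i) (hneg : ∀ i j : I, a i j ≤ 0) :
    (∀ ψ : ℕ → ℤ, InTheta a ι re ψ → ∀ j : ℕ, 0 ≤ ψ j) ∧
    (∀ ψ : ℕ → ℤ, InTheta a ι re ψ → ∀ x : ℕ → ℕ, EvZero x → 0 ≤ evalF ψ x) :=
  stmt15_general a ι re him hneg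
end
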